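/- arXiv:2106.12141 — 3 statements merged into one kernel-verified Lean document; each statement's English description precedes it below -/
import Mathlib

section
/- Vertex-weighted matrix tree theorem: Let D be a finite digraph with positive vertex weights χ(v). Define the vertex-weighted Laplacian Δ^{vertex} = (d_{uv}) by d_{uu} = Σ_{e: t(e)=u} χ(h(e)), d_{uv} = −χ(v) if (u,v) is an arc, and 0 otherwise. Then for any vertex v, Σ_{T∈𝒯(D,v)} Π_{e∈A(T)} χ(h(e)) = det((Δ^{vertex})_{vv}), where (Δ^{vertex})_{vv} is Δ^{vertex} with row and column v deleted. -/
open scoped Classical BigOperators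

section Digraph

variable {V : Type*} [Fintype V] [DecidableEq V]

/-- `T` is a spanning in-tree (arborescence toward the root) of the digraph
with arc set containing `T`, rooted at `r`: every vertex other than `r` has
exactly one outgoing arc in `T`, the root has none, and `T` has no directed cycle. -/
def IsSpTree (T : Finset (V × V)) (r : V) : Prop :=
  (∀ v : V, v ≠ r → ∃! a : V × V, a ∈ T ∧ a.1 = v) ∧
  (∀ a ∈ T, a.1 ≠ r) ∧
  (∀ (v : V) (l : List V), ¬ List.Chain (fun a b => (a, b) ∈ T) v (l ++ [v]))

/-- The set of spanning trees of the digraph with arc set `arcs`, rooted at `r`. -/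
noncomputable def trees (arcs : Finset (V × V)) (r : V) : Finset (Finset (V × V)) :=
  arcs.powerset.filter (fun T => IsSpTree T r)

/-- Edge-weighted complexity with root `r`: `κ^{edge}(D, r, χ)`. -/
noncomputable def kappaEdgeRooted (arcs : Finset (V × V)) (χ : V × V → ℝ) (r : V) : ℝ :=
  ∑ T ∈ trees arcs r, ∏ a ∈ T, χ a

/-- Total edge-weighted complexity `κ^{edge}(D, χ)` (over all roots). -/
noncomputable def kappaEdge (arcs : Finset (V × V)) (χ : V × V → ℝ) : ℝ :=
  ∑ r : V, kappaEdgeRooted arcs χ r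

/-- Vertex-weighted complexity with root `r`: `κ^{vertex}(D, r, χ)`. -/
noncomputable def kappaVertexRooted (arcs : Finset (V × V)) (χv : V → ℝ) (r : V) : ℝ :=
  ∑ T ∈ trees arcs r, ∏ a ∈ T, χv a.2

/-- Total vertex-weighted complexity `κ^{vertex}(D, χ)` (over all roots). -/
noncomputable def kappaVertex (arcs : Finset (V × V)) (χv : V → ℝ) : ℝ :=
  ∑ r : V, kappaVertexRooted arcs χv r

/-- Weighted adjacency matrix `W`: `W_{ij} = χ_{ij}` if `(i,j)` is an arc, else `0`. -/
def adjW (arcs : Finset (V × V)) (χ : V × V → ℝ) : Matrix V V ℝ :=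
  fun i j => if (i, j) ∈ arcs then χ (i, j) else 0

/-- Edge-weighted Laplacian `Δ^{edge}`. -/
def lapEdge (arcs : Finset (V × V)) (χ : V × V → ℝ) : Matrix V V ℝ :=
  fun i j => if i = j then ∑ k ∈ Finset.univ.erase i, adjW arcs χ i k
             else - adjW arcs χ i j

/-- Vertex-weighted Laplacian `Δ^{vertex}`. -/
noncomputable def lapVertex (arcs : Finset (V × V)) (χv : V → ℝ) : Matrix V V ℝ :=
  fun u v => if u = v then ∑ a ∈ arcs.filter (fun a => a.1 = u), χv a.2
             else if (u, v) ∈ arcs then - χv v else 0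

/-- Matrix obtained by deleting the row and column indexed by `v`. -/
def minorAt (A : Matrix V V ℝ) (v : V) : Matrix {u : V // u ≠ v} {u : V // u ≠ v} ℝ :=
  A.submatrix (fun u => (u : V)) (fun u => (u : V))

/-- Out-degree of `v`. -/
def outdeg (arcs : Finset (V × V)) (v : V) : ℕ := (arcs.filter (fun a => a.1 = v)).card

/-- In-degree of `v`. -/
def indeg (arcs : Finset (V × V)) (v : V) : ℕ := (arcs.filter (fun a => a.2 = v)).card

/-- Weighted out-degree `d_v = Σ_{t(e) = v} χ_e`. -/
noncomputable def wOut (arcs : Finset (V × V)) (χ : V × V → ℝ) (v : V) : ℝ :=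
  ∑ a ∈ arcs.filter (fun a => a.1 = v), χ a

end Digraph

/-!
Choosing, for every vertex `u ≠ r`, one out-neighbour `f u` writes row `u` of the reduced
vertex-weighted Laplacian as `∑_w χ(w) (e_u - e_w)`, so by multilinearity its determinant is
`∑_f (∏_u χ(f u)) · det L_f`, where `L_f` is the reduced Laplacian of the functional digraph
`u ↦ f u` with unit weights. If that digraph has a directed cycle avoiding `r`, the rows of `L_f`
along the cycle sum to zero and `det L_f = 0`. Otherwise every non-identity permutation term of
`det L_f` vanishes (a nonzero term would trace out a cycle), so `det L_f = 1`. Finally the acyclic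
choice functions are exactly the spanning trees rooted at `r`, with the same weights.
-/

open Finset Function

theorem Matrix.det_eq_sum_piFinset_of_row_eq_sum {n β R : Type*} [Fintype n] [DecidableEq n]
    [CommRing R] (M : Matrix n n R) (t : n → Finset β) (c : n → β → R) (B : n → β → n → R)
    (hM : ∀ i, M i = ∑ w ∈ t i, c i w • B i w) :
    M.det = ∑ f ∈ Fintype.piFinset t, (∏ i, c i (f i)) * (Matrix.of fun i => B i (f i)).det := by
  have expand := Matrix.detRowAlternating.toMultilinearMap.map_sum_finset
    (fun i w => c i w • B i w) t
  simp only [AlternatingMap.coe_multilinearMap, AlternatingMap.map_smul_univ,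
    smul_eq_mul] at expand
  rw [Matrix.det, show M = fun i => ∑ w ∈ t i, c i w • B i w from funext hM, expand]
  rfl

theorem Matrix.det_eq_zero_of_sum_rows_eq_zero {n R : Type*} [Fintype n] [DecidableEq n]
    [CommRing R] (M : Matrix n n R) {s : Finset n} (hs : s.Nonempty) (h : ∑ i ∈ s, M i = 0) :
    M.det = 0 := by
  obtain ⟨j, hj⟩ := hs
  have hrow : ∑ k, (if k ∈ s then (1 : R) else 0) • M k = 0 := by
    rw [← h, ← sum_subset (subset_univ s) fun k _ hk => by rw [if_neg hk, zero_smul]]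
    exact sum_congr rfl fun k hk => by rw [if_pos hk, one_smul]
  have := M.det_updateRow_sum j (fun k => if k ∈ s then 1 else 0)
  rw [hrow, if_pos hj, one_smul] at this
  rw [← this]
  exact Matrix.det_eq_zero_of_row_eq_zero j fun _ => by simp

theorem Function.iterate_ne_of_mem_periodicPts {α : Type*} {g : α → α} {r x : α}
    (hr : IsFixedPt g r) (hx : x ∈ periodicPts g) (hxr : x ≠ r) (m : ℕ) : g^[m] x ≠ r := by
  intro hm
  obtain ⟨k, hk, hper⟩ := hx
  have : g^[m * k] x = x := (hper.const_mul m).eq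
  rw [show m * k = (m * k - m) + m from (Nat.sub_add_cancel (Nat.le_mul_of_pos_right m hk)).symm,
    iterate_add_apply, hm, (hr.iterate _).eq] at this
  exact hxr this.symm

theorem Function.mem_periodicPts_of_semiconj_perm {α β : Type*} [Fintype α] [DecidableEq α]
    (e : α → β) (g : β → β) (τ : Equiv.Perm α) (h : ∀ i ∈ τ.support, g (e i) = e (τ i))
    {i : α} (hi : i ∈ τ.support) : e i ∈ periodicPts g := by
  have iterate_eq : ∀ n, ∀ i ∈ τ.support, g^[n] (e i) = e ((τ ^ n) i) := by
    intro n
    induction n with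
    | zero => simp
    | succ n ih =>
      intro i hi
      rw [iterate_succ_apply, h i hi, ih _ (Equiv.Perm.apply_mem_support.2 hi), pow_succ,
        Equiv.Perm.mul_apply]
  refine mk_mem_periodicPts (orderOf_pos τ) ?_
  rw [IsPeriodicPt, IsFixedPt, iterate_eq _ i hi, pow_orderOf_eq_one, Equiv.Perm.one_apply]

theorem List.isChain_iterate {α : Type*} {R : α → α → Prop} (g : α → α) (a : α) (n : ℕ)
    (h : ∀ m, R (g^[m] a) (g^[m + 1] a)) : IsChain R (List.iterate g a n) := by
  rw [List.isChain_iff_getElem]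
  intro i hi
  simp only [List.getElem_iterate, h]

namespace VertexMatrixTree

section

variable {V : Type*} [DecidableEq V] {r : V}

def succMap (f : {u // u ≠ r} → V) : V → V := fun x => if h : x = r then r else f ⟨x, h⟩

@[simp] theorem succMap_root (f : {u // u ≠ r} → V) : succMap f r = r := dif_pos rfl

@[simp] theorem succMap_coe (f : {u // u ≠ r} → V) (i : {u // u ≠ r}) : succMap f i = f i :=
  dif_neg i.2

theorem isFixedPt_succMap_root (f : {u // u ≠ r} → V) : IsFixedPt (succMap f) r :=
  succMap_root f

/-- The periodic points of `succMap f` other than the root are the vertices on directed cycles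
of the functional digraph `u ↦ f u`. -/
def HasCycle (f : {u // u ≠ r} → V) : Prop :=
  ∃ i : {u // u ≠ r}, (i : V) ∈ periodicPts (succMap f)

def outNbrs (arcs : Finset (V × V)) (x : V) : Finset V :=
  (arcs.filter fun a => a.1 = x).image Prod.snd

theorem mem_outNbrs {arcs : Finset (V × V)} {x w : V} :
    w ∈ outNbrs arcs x ↔ (x, w) ∈ arcs := by
  simp [outNbrs]

theorem sum_filter_fst_eq_sum_outNbrs {M : Type*} [AddCommMonoid M] (arcs : Finset (V × V))
    (x : V) (φ : V → M) :
    ∑ a ∈ arcs.filter (fun a => a.1 = x), φ a.2 = ∑ w ∈ outNbrs arcs x, φ w :=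
  (sum_image fun _ ha _ hb hab =>
    Prod.ext ((mem_filter.1 ha).2.trans (mem_filter.1 hb).2.symm) hab).symm

theorem minorAt_lapVertex_row (arcs : Finset (V × V)) (χv : V → ℝ)
    (hloop : ∀ v : V, (v, v) ∉ arcs) (i : {u // u ≠ r}) :
    minorAt (lapVertex arcs χv) r i =
      ∑ w ∈ outNbrs arcs i, χv w • fun j => (if i = j then 1 else 0) - if w = j then 1 else 0 := by
  ext j
  rw [Finset.sum_apply]
  simp only [minorAt, lapVertex, Matrix.submatrix_apply, Pi.smul_apply, smul_eq_mul, mul_sub,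
    mul_ite, mul_one, mul_zero, sum_sub_distrib, sum_ite_eq', mem_outNbrs]
  by_cases hij : i = j
  · subst hij
    simp [sum_filter_fst_eq_sum_outNbrs, hloop]
  · simp only [hij, Subtype.ext_iff.not.1 hij, if_false]
    split_ifs <;> simp

variable (R : Type*) [CommRing R]

def funLap (f : {u // u ≠ r} → V) : Matrix {u // u ≠ r} {u // u ≠ r} R :=
  Matrix.of fun i j => (if i = j then 1 else 0) - if f i = j then 1 else 0

end

variable {V : Type*} [Fintype V] [DecidableEq V] {r : V}

def arcsOf (f : {u // u ≠ r} → V) : Finset (V × V) :=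
  univ.image fun i : {u // u ≠ r} => ((i : V), f i)

theorem mem_arcsOf {f : {u // u ≠ r} → V} {a : V × V} :
    a ∈ arcsOf f ↔ a.1 ≠ r ∧ succMap f a.1 = a.2 := by
  constructor
  · rintro h
    obtain ⟨i, -, rfl⟩ := mem_image.1 h
    exact ⟨i.2, succMap_coe f i⟩
  · rintro ⟨ha, hf⟩
    refine mem_image.2 ⟨⟨a.1, ha⟩, mem_univ _, Prod.ext rfl ?_⟩
    rw [← hf]
    exact (succMap_coe f ⟨a.1, ha⟩).symm

theorem arcsOf_injective : Injective (arcsOf (V := V) (r := r)) := by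
  intro f g h
  funext i
  have hi : ((i : V), f i) ∈ arcsOf g := h ▸ mem_image_of_mem _ (mem_univ i)
  simpa using (mem_arcsOf.1 hi).2.symm

theorem exists_arcsOf_eq {T : Finset (V × V)} (hout : ∀ v, v ≠ r → ∃! a, a ∈ T ∧ a.1 = v)
    (hroot : ∀ a ∈ T, a.1 ≠ r) : ∃ f : {u // u ≠ r} → V, arcsOf f = T := by
  choose a ha huniq using hout
  have hcoe : ∀ i : {u // u ≠ r}, ((i : V), (a i i.2).2) = a i i.2 :=
    fun i => Prod.ext (ha i i.2).2.symm rfl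
  refine ⟨fun i => (a i i.2).2, Finset.ext fun b => ⟨fun hb => ?_, fun hb => ?_⟩⟩
  · obtain ⟨i, -, rfl⟩ := mem_image.1 hb
    rw [hcoe]
    exact (ha i i.2).1
  · refine mem_image.2 ⟨⟨b.1, hroot b hb⟩, mem_univ _, ?_⟩
    rw [hcoe]
    exact (huniq _ _ b ⟨hb, rfl⟩).symm

theorem isSpTree_arcsOf_iff {f : {u // u ≠ r} → V} : IsSpTree (arcsOf f) r ↔ ¬HasCycle f := by
  set g := succMap f
  constructor
  · rintro ⟨-, -, hacyclic⟩ ⟨i, k, hk, hper⟩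
    obtain ⟨k, rfl⟩ := Nat.exists_eq_succ_of_ne_zero hk.ne'
    have hclosed : (i : V) :: (List.iterate g (g i) k ++ [(i : V)]) =
        List.iterate g i (k + 2) := by
      rw [List.iterate, List.iterate_add g (g i) k 1, show g^[k] (g i) = i from hper.eq]
      rfl
    refine hacyclic i (List.iterate g (g i) k) ?_
    change List.IsChain _ ((i : V) :: _)
    rw [hclosed]
    refine List.isChain_iterate g i _ fun m =>
      mem_arcsOf.2 ⟨?_, (iterate_succ_apply' g m i).symm⟩
    exact iterate_ne_of_mem_periodicPts (isFixedPt_succMap_root f) ⟨_, hk, hper⟩ i.2 m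
  · intro hf
    refine ⟨fun v hv => ⟨(v, f ⟨v, hv⟩), ⟨mem_arcsOf.2 ⟨hv, succMap_coe f ⟨v, hv⟩⟩, rfl⟩, ?_⟩,
      fun a ha => (mem_arcsOf.1 ha).1, fun v l hl => ?_⟩
    · rintro a ⟨ha, rfl⟩
      exact Prod.ext rfl ((mem_arcsOf.1 ha).2.symm.trans (succMap_coe f ⟨a.1, hv⟩))
    · have hv : v ≠ r := (mem_arcsOf.1 (List.IsChain.getElem hl 0 (by simp))).1
      have hper := (List.IsChain.imp (fun _ _ h => (mem_arcsOf.1 h).2) hl).iterate_eq_of_apply_eq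
        (l.length + 1) (by simp)
      simp only [List.getElem_cons_zero, List.getElem_cons_succ, List.getElem_append_right,
        le_refl, Nat.sub_self] at hper
      exact hf ⟨⟨v, hv⟩, mk_mem_periodicPts l.length.succ_pos hper⟩

theorem arcsOf_subset_iff {arcs : Finset (V × V)} {f : {u // u ≠ r} → V} :
    arcsOf f ⊆ arcs ↔ f ∈ Fintype.piFinset fun i : {u // u ≠ r} => outNbrs arcs i := by
  simp [arcsOf, image_subset_iff, mem_outNbrs]

theorem trees_eq_image (arcs : Finset (V × V)) (r : V) :
    trees arcs r = ((Fintype.piFinset fun i : {u // u ≠ r} => outNbrs arcs i).filter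
      (¬HasCycle ·)).image arcsOf := by
  ext T
  simp only [trees, mem_filter, mem_powerset, mem_image]
  constructor
  · rintro ⟨hsub, hT⟩
    obtain ⟨f, rfl⟩ := exists_arcsOf_eq hT.1 hT.2.1
    exact ⟨f, ⟨arcsOf_subset_iff.1 hsub, isSpTree_arcsOf_iff.1 hT⟩, rfl⟩
  · rintro ⟨f, ⟨hf, hacyclic⟩, rfl⟩
    exact ⟨arcsOf_subset_iff.2 hf, isSpTree_arcsOf_iff.2 hacyclic⟩

theorem kappaVertexRooted_eq_sum (arcs : Finset (V × V)) (χv : V → ℝ) (r : V) :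
    kappaVertexRooted arcs χv r =
      ∑ f ∈ (Fintype.piFinset fun i : {u // u ≠ r} => outNbrs arcs i).filter (¬HasCycle ·),
        ∏ i, χv (f i) := by
  rw [kappaVertexRooted, trees_eq_image, sum_image fun f _ g _ h => arcsOf_injective h]
  refine sum_congr rfl fun f _ => ?_
  rw [arcsOf, prod_image fun i _ j _ h => Subtype.ext (Prod.ext_iff.1 h).1]

variable (R : Type*) [CommRing R]

theorem sum_funLap_rows_periodicPts (f : {u // u ≠ r} → V) :
    ∑ i ∈ univ.filter (fun i : {u // u ≠ r} => (i : V) ∈ periodicPts (succMap f)),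
      funLap R f i = 0 := by
  set S := univ.filter fun i : {u // u ≠ r} => (i : V) ∈ periodicPts (succMap f)
  set S' := S.map (Embedding.subtype _)
  have hS' : (S' : Set V) = periodicPts (succMap f) \ {r} := by
    ext x
    simp [S', S, and_comm]
  have hbij : Set.BijOn (succMap f) S' S' := by
    rw [hS']
    simpa [(isFixedPt_succMap_root f).eq] using
      (bijOn_periodicPts _).sdiff_singleton
        (mk_mem_periodicPts one_pos ((isFixedPt_succMap_root f).isPeriodicPt 1))
  ext j
  have reindex : ∑ i ∈ S, (if f i = j then (1 : R) else 0) = ∑ i ∈ S, if i = j then 1 else 0 :=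
    calc ∑ i ∈ S, (if f i = j then (1 : R) else 0)
        = ∑ x ∈ S', if succMap f x = j then (1 : R) else 0 := by
          simp only [S', sum_map, Embedding.coe_subtype, succMap_coe]
      _ = ∑ x ∈ S', if x = (j : V) then (1 : R) else 0 :=
        sum_nbij (succMap f) (fun _ hx => hbij.mapsTo hx) hbij.injOn hbij.surjOn fun _ _ => rfl
      _ = ∑ i ∈ S, if i = j then 1 else 0 := by
          simp only [S', sum_map, Embedding.coe_subtype, Subtype.coe_inj]
  refine (Finset.sum_apply j S fun i => funLap R f i).trans ?_
  simp only [funLap, Matrix.of_apply, sum_sub_distrib, reindex, sub_self, Pi.zero_apply]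

theorem det_funLap_of_hasCycle {f : {u // u ≠ r} → V} (hf : HasCycle f) :
    (funLap R f).det = 0 := by
  obtain ⟨i, hi⟩ := hf
  exact Matrix.det_eq_zero_of_sum_rows_eq_zero _ ⟨i, mem_filter.2 ⟨mem_univ i, hi⟩⟩
    (sum_funLap_rows_periodicPts R f)

/-- A nonzero term forces `f (σ i) = i` wherever `σ` moves `i`, so `succMap f` runs backwards
along the cycles of `σ`. -/
theorem prod_funLap_perm_eq_zero {f : {u // u ≠ r} → V} (hf : ¬HasCycle f)
    {σ : Equiv.Perm {u // u ≠ r}} (hσ : σ ≠ 1) : ∏ i, funLap R f (σ i) i = 0 := by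
  by_contra hprod
  have hback : ∀ i ∈ σ⁻¹.support, succMap f i = ↑(σ⁻¹ i) := by
    intro i hi
    obtain ⟨k, rfl⟩ := σ.surjective i
    have hmoved : σ k ≠ k := by simpa [eq_comm] using Equiv.Perm.mem_support.1 hi
    have hentry : funLap R f (σ k) k ≠ 0 := fun h => hprod (prod_eq_zero (mem_univ k) h)
    rw [Equiv.Perm.coe_inv, Equiv.symm_apply_apply, succMap_coe]
    by_contra hne
    exact hentry (by simp [funLap, hmoved, hne])
  obtain ⟨i, hi⟩ : σ⁻¹.support.Nonempty := by
    rwa [nonempty_iff_ne_empty, ne_eq, Equiv.Perm.support_eq_empty_iff, inv_eq_one]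
  exact hf ⟨i, mem_periodicPts_of_semiconj_perm _ _ σ⁻¹ hback hi⟩

theorem det_funLap_of_not_hasCycle {f : {u // u ≠ r} → V} (hf : ¬HasCycle f) :
    (funLap R f).det = 1 := by
  have hloopless : ∀ i, f i ≠ i := fun i hfix =>
    hf ⟨i, mk_mem_periodicPts one_pos (by simpa [IsPeriodicPt, IsFixedPt] using hfix)⟩
  rw [Matrix.det_apply, sum_eq_single 1
    (fun σ _ hσ => by rw [prod_funLap_perm_eq_zero R hf hσ, smul_zero])
    (fun h => absurd (mem_univ 1) h)]
  simp [funLap, hloopless]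

theorem det_funLap (f : {u // u ≠ r} → V) :
    (funLap R f).det = if HasCycle f then 0 else 1 := by
  split_ifs with hf
  exacts [det_funLap_of_hasCycle R hf, det_funLap_of_not_hasCycle R hf]

theorem det_minorAt_lapVertex (arcs : Finset (V × V)) (χv : V → ℝ)
    (hloop : ∀ v : V, (v, v) ∉ arcs) (r : V) :
    (minorAt (lapVertex arcs χv) r).det =
      ∑ f ∈ Fintype.piFinset fun i : {u // u ≠ r} => outNbrs arcs i,
        (∏ i, χv (f i)) * (funLap ℝ f).det :=
  Matrix.det_eq_sum_piFinset_of_row_eq_sum _ _ _ _ (minorAt_lapVertex_row arcs χv hloop)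

end VertexMatrixTree

theorem vertex_matrix_tree_theorem_general {V : Type*} [Fintype V] [DecidableEq V]
    (arcs : Finset (V × V)) (χv : V → ℝ)
    (hsimple : ∀ v : V, (v, v) ∉ arcs)
    (v : V) :
    kappaVertexRooted arcs χv v = (minorAt (lapVertex arcs χv) v).det := by
  rw [VertexMatrixTree.kappaVertexRooted_eq_sum, VertexMatrixTree.det_minorAt_lapVertex arcs χv
    hsimple, sum_filter]
  refine sum_congr rfl fun f _ => ?_
  rw [VertexMatrixTree.det_funLap]
  split_ifs <;> simp

/-- **Vertex-weighted matrix tree theorem.** -/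
theorem vertex_matrix_tree_theorem {V : Type*} [Fintype V] [DecidableEq V]
    (arcs : Finset (V × V)) (χv : V → ℝ)
    (hsimple : ∀ v : V, (v, v) ∉ arcs)
    (hpos : ∀ v : V, 0 < χv v) (v : V) :
    kappaVertexRooted arcs χv v = (minorAt (lapVertex arcs χv) v).det :=
  vertex_matrix_tree_theorem_general arcs χv hsimple v
end

section
/- Let D be a weighted digraph with n vertices and m arcs, with vertex weights χ_i and arc weights χ_e, and let M(D) be its middle digraph with vertex weights inherited from D (vertices of D keep their weight; the vertex corresponding to arc e gets weight χ_e). Then the characteristic polynomial of the vertex-weighted Laplacian of M(D) satisfies det(λI_{m+n} − Δ^{vertex}(M(D))) = det(λI_n − Δ^{edge}(D)) · Π_{i=1}^{n} (λ − χ_i − d_i)^{r_i}, where r_i is the indegree of v_i in D and d_i = Σ_{e: t(e)=v_i} χ_e. -/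
open scoped Classical BigOperators

section MiddleDigraph

variable {V : Type*} [Fintype V] [DecidableEq V]

/-- Arc set of the middle digraph `M(D)` on the vertex set `V(D) ⊕ A(D)`:
each arc `e = (u, v)` of `D` is replaced by the directed path `u → e → v`, and
there is an arc `e → f` whenever the head of `e` equals the tail of `f`. -/
noncomputable def midArcs (arcs : Finset (V × V)) :
    Finset ((V ⊕ {a : V × V // a ∈ arcs}) × (V ⊕ {a : V × V // a ∈ arcs})) :=
  Finset.univ.filter (fun p =>
    match p with
    | (Sum.inl u, Sum.inr e) => (e : V × V).1 = u
    | (Sum.inr e, Sum.inl v) => (e : V × V).2 = v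
    | (Sum.inr e, Sum.inr f) => (e : V × V).2 = (f : V × V).1
    | _ => False)

/-- Vertex weights of `M(D)`: vertices coming from `V(D)` keep their vertex weight,
and the vertex corresponding to an arc `e` gets the arc weight `χ_e`. -/
noncomputable def midWeight (arcs : Finset (V × V)) (χv : V → ℝ) (χ : V × V → ℝ) :
    V ⊕ {a : V × V // a ∈ arcs} → ℝ :=
  Sum.elim χv (fun e => χ (e : V × V))

end MiddleDigraph

/-!
Order the vertices of `M(D)` as `V(D)` followed by `A(D)`, and let `H` be the head-incidence
matrix (`H e v = 1` iff `h(e) = v`) and `T` the `χ`-weighted tail-incidence matrix. For a loopless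
`D` we have `Δ^{edge}(D) = diag d - T H` and
`Δ^{vertex}(M(D)) = [[diag d, -T], [-H diag χ, Λ - H T]]` with `Λ = diag (χ_{h(e)} + d_{h(e)})`.
Since `Λ H = H diag (χ + d)`, conjugating by `[[1, 0], [-H, 1]]` makes this block upper
triangular with diagonal blocks `Δ^{edge}(D)` and `Λ`, and the characteristic polynomial of `Λ`
collects one factor `λ - χ_v - d_v` for each arc with head `v`.
-/

namespace Matrix

variable {K : Type*} [CommRing K] {m n : Type*} [Fintype m] [Fintype n] [DecidableEq m]
  [DecidableEq n]

theorem charpoly_fromBlocks_of_mul_eq {A : Matrix m m K} {B : Matrix m n K} {C : Matrix n m K}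
    {D : Matrix n n K} (R : Matrix n m K) (h : C + D * R = R * (A + B * R)) :
    (fromBlocks A B C D).charpoly = (A + B * R).charpoly * (D - R * B).charpoly := by
  have hconj : fromBlocks 1 0 (-R) 1 * (fromBlocks A B C D * fromBlocks 1 0 R 1) =
      fromBlocks (A + B * R) B 0 (D - R * B) := by
    simp only [fromBlocks_multiply, Matrix.one_mul, Matrix.mul_one, Matrix.zero_mul,
      Matrix.mul_zero, zero_add, add_zero, Matrix.neg_mul, h, neg_add_cancel]
    rw [neg_add_eq_sub]
  have hinv : fromBlocks 1 0 R 1 * fromBlocks 1 0 (-R) 1 = (1 : Matrix (m ⊕ n) (m ⊕ n) K) := by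
    simp [fromBlocks_multiply]
  rw [← charpoly_fromBlocks_zero₂₁, ← hconj, charpoly_mul_comm, Matrix.mul_assoc, hinv,
    Matrix.mul_one]

end Matrix

section Incidence

open Matrix

variable {V : Type*} [DecidableEq V]

def headIncidence (arcs : Finset (V × V)) : Matrix {a // a ∈ arcs} V ℝ :=
  of fun e v => if (e : V × V).2 = v then 1 else 0

def tailIncidence (arcs : Finset (V × V)) (χ : V × V → ℝ) : Matrix V {a // a ∈ arcs} ℝ :=
  of fun u e => if (e : V × V).1 = u then χ e else 0

variable {arcs : Finset (V × V)}

theorem headIncidence_mul_apply [Fintype V] {ι : Type*} (M : Matrix V ι ℝ)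
    (e : {a // a ∈ arcs}) (j : ι) :
    (headIncidence arcs * M) e j = M (e : V × V).2 j := by
  simp [headIncidence, mul_apply]

theorem sum_headIncidence [Fintype V] (e : {a // a ∈ arcs}) :
    ∑ v, headIncidence arcs e v = 1 := by
  simp [headIncidence]

theorem diagonal_mul_headIncidence [Fintype V] (f : V → ℝ) :
    diagonal (fun e : {a // a ∈ arcs} => f (e : V × V).2) * headIncidence arcs =
      headIncidence arcs * diagonal f := by
  ext e v
  rw [headIncidence_mul_apply, diagonal_mul]
  by_cases h : (e : V × V).2 = v <;> simp [headIncidence, h]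

theorem sum_tailIncidence (χ : V × V → ℝ) (u : V) :
    ∑ e, tailIncidence arcs χ u e = wOut arcs χ u := by
  simp only [tailIncidence, of_apply, wOut, Finset.sum_filter]
  exact Finset.sum_attach arcs (fun a => if a.1 = u then χ a else 0)

theorem tailIncidence_mul_headIncidence (χ : V × V → ℝ) :
    tailIncidence arcs χ * headIncidence arcs = adjW arcs χ := by
  ext u v
  have hterm : ∀ e : {a // a ∈ arcs}, tailIncidence arcs χ u e * headIncidence arcs e v =
      if (e : V × V) = (u, v) then χ (u, v) else 0 := by
    rintro ⟨⟨a, b⟩, hab⟩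
    by_cases ha : a = u <;> by_cases hb : b = v <;> simp [tailIncidence, headIncidence, ha, hb]
  rw [mul_apply, Finset.sum_congr rfl (fun e _ => hterm e), Finset.univ_eq_attach,
    Finset.sum_attach arcs (fun a => if a = (u, v) then χ (u, v) else 0), Finset.sum_ite_eq']
  rfl

theorem wOut_eq_sum_adjW [Fintype V] (χ : V × V → ℝ) (u : V) :
    wOut arcs χ u = ∑ v, adjW arcs χ u v := by
  simp only [← tailIncidence_mul_headIncidence, mul_apply]
  rw [Finset.sum_comm, ← sum_tailIncidence]
  simp only [← Finset.mul_sum, sum_headIncidence, mul_one]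

end Incidence

section Laplacian

open Matrix

variable {V : Type*} [DecidableEq V] {arcs : Finset (V × V)}

theorem lapEdge_eq_diagonal_sub_adjW [Fintype V] (hloop : ∀ v, (v, v) ∉ arcs) (χ : V × V → ℝ) :
    lapEdge arcs χ = diagonal (wOut arcs χ) - adjW arcs χ := by
  ext u v
  have hzero : adjW arcs χ u u = 0 := if_neg (hloop u)
  by_cases h : u = v
  · subst h
    simp [lapEdge, Finset.sum_erase _ hzero, wOut_eq_sum_adjW, hzero]
  · simp [lapEdge, h]

theorem lapVertex_eq_diagonal_sub_adjW (hloop : ∀ v, (v, v) ∉ arcs) (χv : V → ℝ) :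
    lapVertex arcs χv =
      diagonal (wOut arcs (fun a => χv a.2)) - adjW arcs (fun a => χv a.2) := by
  ext u v
  by_cases h : u = v
  · subst h
    simp [lapVertex, wOut, adjW, hloop u]
  · simp [lapVertex, adjW, h, neg_ite]

end Laplacian

section Middle

open Matrix

variable {V : Type*} [Fintype V] [DecidableEq V] {arcs : Finset (V × V)}

omit [DecidableEq V] in
theorem midArcs_loopless (hloop : ∀ v, (v, v) ∉ arcs) (x : V ⊕ {a // a ∈ arcs}) :
    (x, x) ∉ midArcs arcs := by
  rcases x with u | ⟨⟨a, b⟩, hab⟩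
  · simp [midArcs]
  · simp only [midArcs, Finset.mem_filter, Finset.mem_univ, true_and]
    exact fun h => hloop a (h ▸ hab)

theorem adjW_midArcs (χv : V → ℝ) (χ : V × V → ℝ) :
    adjW (midArcs arcs) (fun a => midWeight arcs χv χ a.2) =
      fromBlocks 0 (tailIncidence arcs χ) (headIncidence arcs * diagonal χv)
        (headIncidence arcs * tailIncidence arcs χ) := by
  ext (u | e) (v | f)
  · simp [adjW, midArcs]
  · simp [adjW, midArcs, midWeight, tailIncidence]
  · by_cases h : (e : V × V).2 = v <;> simp [adjW, midArcs, midWeight, headIncidence, h]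
  · simp [adjW, midArcs, midWeight, headIncidence_mul_apply, tailIncidence, eq_comm]

theorem wOut_midArcs (χv : V → ℝ) (χ : V × V → ℝ) :
    wOut (midArcs arcs) (fun a => midWeight arcs χv χ a.2) =
      Sum.elim (wOut arcs χ)
        (fun e : {a // a ∈ arcs} => χv (e : V × V).2 + wOut arcs χ (e : V × V).2) := by
  funext x
  rw [wOut_eq_sum_adjW, adjW_midArcs, Fintype.sum_sum_type]
  rcases x with u | e
  · simp [-Finset.univ_eq_attach, sum_tailIncidence]
  · simp only [fromBlocks_apply₂₁, fromBlocks_apply₂₂, headIncidence_mul_apply, sum_tailIncidence]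
    simp [diagonal_apply]

theorem lapVertex_midArcs (hloop : ∀ v, (v, v) ∉ arcs) (χv : V → ℝ) (χ : V × V → ℝ) :
    lapVertex (midArcs arcs) (midWeight arcs χv χ) =
      fromBlocks (diagonal (wOut arcs χ)) (-tailIncidence arcs χ)
        (-(headIncidence arcs * diagonal χv))
        (diagonal (fun e : {a // a ∈ arcs} => χv (e : V × V).2 + wOut arcs χ (e : V × V).2) -
          headIncidence arcs * tailIncidence arcs χ) := by
  rw [lapVertex_eq_diagonal_sub_adjW (midArcs_loopless hloop), wOut_midArcs, adjW_midArcs,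
    ← fromBlocks_diagonal, sub_eq_add_neg, fromBlocks_neg, fromBlocks_add]
  simp [sub_eq_add_neg]

theorem prod_head_eq_prod_pow_indeg {M : Type*} [CommMonoid M] (f : V → M) :
    ∏ e : {a // a ∈ arcs}, f (e : V × V).2 = ∏ v, f v ^ indeg arcs v := by
  rw [Finset.univ_eq_attach, Finset.prod_attach arcs (fun a => f a.2),
    ← Finset.prod_fiberwise' arcs Prod.snd f]
  simp [indeg]

end Middle

open Polynomial in
theorem charpoly_lapVertex_middle_general {V : Type*} [Fintype V] [DecidableEq V]
    (arcs : Finset (V × V)) (χv : V → ℝ) (χ : V × V → ℝ)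
    (hsimple : ∀ v : V, (v, v) ∉ arcs) :
    (lapVertex (midArcs arcs) (midWeight arcs χv χ)).charpoly =
      (lapEdge arcs χ).charpoly *
        ∏ i : V, (X - C (χv i + wOut arcs χ i)) ^ (indeg arcs i) := by
  open Matrix in
  have hcomm :
      diagonal (fun e : {a // a ∈ arcs} => χv (e : V × V).2 + wOut arcs χ (e : V × V).2) *
        headIncidence arcs = headIncidence arcs * (diagonal χv + diagonal (wOut arcs χ)) := by
    rw [diagonal_add]
    exact diagonal_mul_headIncidence (fun v => χv v + wOut arcs χ v)
  rw [lapVertex_midArcs hsimple, Matrix.charpoly_fromBlocks_of_mul_eq (headIncidence arcs) ?_]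
  · rw [Matrix.neg_mul, ← sub_eq_add_neg, tailIncidence_mul_headIncidence,
      ← lapEdge_eq_diagonal_sub_adjW hsimple, Matrix.mul_neg, sub_neg_eq_add, sub_add_cancel,
      Matrix.charpoly_diagonal, prod_head_eq_prod_pow_indeg (fun v => X - C (χv v + wOut arcs χ v))]
  · rw [Matrix.sub_mul, hcomm, Matrix.neg_mul, Matrix.mul_add, Matrix.mul_add, Matrix.mul_neg,
      Matrix.mul_assoc]
    abel

open Polynomial in
/-- Characteristic polynomial of the vertex-weighted Laplacian of the middle digraph:
`det(λI − Δ^{vertex}(M(D))) = det(λI − Δ^{edge}(D)) · Π_i (λ − χ_i − d_i)^{r_i}`. -/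
theorem charpoly_lapVertex_middle {V : Type*} [Fintype V] [DecidableEq V]
    (arcs : Finset (V × V)) (χv : V → ℝ) (χ : V × V → ℝ)
    (hsimple : ∀ v : V, (v, v) ∉ arcs)
    (hposv : ∀ v : V, 0 < χv v) (hpose : ∀ a ∈ arcs, 0 < χ a) :
    (lapVertex (midArcs arcs) (midWeight arcs χv χ)).charpoly =
      (lapEdge arcs χ).charpoly *
        ∏ i : V, (X - C (χv i + wOut arcs χ i)) ^ (indeg arcs i) :=
  charpoly_lapVertex_middle_general arcs χv χ hsimple
end

section
/- Block determinant computation: Let F be an invertible n×n diagonal matrix, M an n×m matrix, L an m×n matrix, Q an n×n diagonal matrix, and S an invertible m×m matrix. Then det([[λI_n − F, M],[LQ, λI_m − S + LM]]) = det(λI_n − F) · det(λI_m − S) · det(I_n − (Q(λI_n − F)^{−1} − I_n) · M (λI_m − S)^{−1} L), whenever λI_n − F and λI_m − S are invertible. -/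
/-!
Eliminating the upper-left block `λI − F` turns the determinant into
`det(λI − F) · det(λI − S + LM − LQ(λI − F)⁻¹M)`. Factoring `λI − S` out of that Schur complement
leaves `det(I − (λI − S)⁻¹ L (Q(λI − F)⁻¹ − I) M)`, and Sylvester's identity
`det(I − XY) = det(I − YX)` moves `(λI − S)⁻¹ L` to the right.
-/

namespace Matrix

variable {n m R : Type*} [Fintype n] [Fintype m] [DecidableEq n] [DecidableEq m] [CommRing R]

theorem add_mul_sub_mul_mul_mul_eq_mul_one_sub (D : Matrix m m R) (hD : IsUnit D.det)
    (B Q : Matrix n n R) (M : Matrix n m R) (L : Matrix m n R) :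
    D + L * M - L * Q * B * M = D * (1 - D⁻¹ * L * ((Q * B - 1) * M)) := by
  rw [Matrix.mul_sub, Matrix.mul_one, Matrix.mul_assoc D⁻¹, mul_nonsing_inv_cancel_left _ _ hD]
  simp only [Matrix.mul_sub, Matrix.sub_mul, Matrix.one_mul, Matrix.mul_assoc]
  abel

theorem det_fromBlocks_mul_add_mul (A Q : Matrix n n R) (M : Matrix n m R) (L : Matrix m n R)
    (D : Matrix m m R) (hA : IsUnit A.det) (hD : IsUnit D.det) :
    (fromBlocks A M (L * Q) (D + L * M)).det =
      A.det * D.det * (1 - (Q * A⁻¹ - 1) * M * D⁻¹ * L).det := by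
  let := A.invertibleOfIsUnitDet hA
  rw [det_fromBlocks₁₁, invOf_eq_nonsing_inv, add_mul_sub_mul_mul_mul_eq_mul_one_sub D hD,
    det_mul, det_one_sub_mul_comm, mul_assoc]
  simp only [Matrix.mul_assoc]

end Matrix

theorem block_det_computation_general {n m : Type*} [Fintype n] [Fintype m]
    [DecidableEq n] [DecidableEq m]
    (F Q : Matrix n n ℝ) (M : Matrix n m ℝ) (L : Matrix m n ℝ) (S : Matrix m m ℝ)
    (lam : ℝ)
    (h1 : IsUnit (lam • (1 : Matrix n n ℝ) - F).det)
    (h2 : IsUnit (lam • (1 : Matrix m m ℝ) - S).det) :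
    (Matrix.fromBlocks (lam • (1 : Matrix n n ℝ) - F) M
        (L * Q) (lam • (1 : Matrix m m ℝ) - S + L * M)).det =
      (lam • (1 : Matrix n n ℝ) - F).det * (lam • (1 : Matrix m m ℝ) - S).det *
        ((1 : Matrix n n ℝ) -
          (Q * (lam • (1 : Matrix n n ℝ) - F)⁻¹ - 1) * M *
            (lam • (1 : Matrix m m ℝ) - S)⁻¹ * L).det :=
  Matrix.det_fromBlocks_mul_add_mul _ Q M L _ h1 h2

/-- **Block determinant computation.** For an invertible diagonal `F`, diagonal `Q`,
and invertible `S`, whenever `λI − F` and `λI − S` are invertible,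
`det [[λI−F, M],[LQ, λI−S+LM]] = det(λI−F) · det(λI−S) ·
det(I − (Q(λI−F)⁻¹ − I) M (λI−S)⁻¹ L)`. -/
theorem block_det_computation {n m : Type*} [Fintype n] [Fintype m]
    [DecidableEq n] [DecidableEq m]
    (F Q : Matrix n n ℝ) (M : Matrix n m ℝ) (L : Matrix m n ℝ) (S : Matrix m m ℝ)
    (lam : ℝ)
    (hF : F.IsDiag) (hQ : Q.IsDiag) (hFinv : IsUnit F.det) (hSinv : IsUnit S.det)
    (h1 : IsUnit (lam • (1 : Matrix n n ℝ) - F).det)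
    (h2 : IsUnit (lam • (1 : Matrix m m ℝ) - S).det) :
    (Matrix.fromBlocks (lam • (1 : Matrix n n ℝ) - F) M
        (L * Q) (lam • (1 : Matrix m m ℝ) - S + L * M)).det =
      (lam • (1 : Matrix n n ℝ) - F).det * (lam • (1 : Matrix m m ℝ) - S).det *
        ((1 : Matrix n n ℝ) -
          (Q * (lam • (1 : Matrix n n ℝ) - F)⁻¹ - 1) * M *
            (lam • (1 : Matrix m m ℝ) - S)⁻¹ * L).det :=
  block_det_computation_general F Q M L S lam h1 h2
end
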